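/- Let σ_1, σ_2 ∈ L_q([0,1]) be spectral functions with σ_1 majorized by σ_2. Then for every Z ∈ L_p([0,1]), ∫₀¹ σ_1(t) F_Z^{-1}(t) dt ≤ ∫₀¹ σ_2(t) F_Z^{-1}(t) dt. -/

import Mathlib

open MeasureTheory Set Filter Topology
open scoped ENNReal

noncomputable section

/-- The standard probability space: the uniform (Lebesgue) probability measure on `[0,1] ⊆ ℝ`. -/
def stdP : Measure ℝ := volume.restrict (Icc (0:ℝ) 1)

/-- Cumulative distribution function of a random variable `Z` on the standard space. -/
def cdf (Z : ℝ → ℝ) (z : ℝ) : ℝ := (stdP {ω | Z ω ≤ z}).toReal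

/-- Right-side quantile function `F_Z^{-1}(τ) = sup{t : F_Z(t) ≤ τ}`. -/
def quant (Z : ℝ → ℝ) (τ : ℝ) : ℝ := sSup {t : ℝ | cdf Z t ≤ τ}

/-- Average Value-at-Risk at level `α`. -/
def avar (Z : ℝ → ℝ) (α : ℝ) : ℝ := (1 - α)⁻¹ * ∫ τ in Ioc α 1, quant Z τ

/-- The scalar product `⟨ζ, Z⟩ = ∫₀¹ ζ(τ) Z(τ) dτ`. -/
def pairing (ζ Z : ℝ → ℝ) : ℝ := ∫ ω, ζ ω * Z ω ∂stdP

/-- Expectation w.r.t. the standard probability space. -/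
def expct (Z : ℝ → ℝ) : ℝ := ∫ ω, Z ω ∂stdP

/-- `μ ∈ 𝔓`: a probability measure supported on `[0,1]` with zero mass at `{1}`. -/
def IsP01 (μ : Measure ℝ) : Prop :=
  IsProbabilityMeasure μ ∧ μ (Icc (0:ℝ) 1)ᶜ = 0 ∧ μ {(1:ℝ)} = 0

/-- cdf of a measure on ℝ. -/
def mcdf (μ : Measure ℝ) (x : ℝ) : ℝ := (μ (Iic x)).toReal

/-- First order stochastic dominance `μ ≼ ν`, i.e. `μ(x) ≥ ν(x)` for all `x`. -/
def FSD (μ ν : Measure ℝ) : Prop := ∀ x : ℝ, mcdf ν x ≤ mcdf μ x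

/-- The map `𝕋`: `(𝕋μ)(τ) = ∫_{[0,τ]} (1-α)⁻¹ dμ(α)`. -/
def Tmap (μ : Measure ℝ) (τ : ℝ) : ℝ := ∫ α in Icc (0:ℝ) τ, (1 - α)⁻¹ ∂μ

/-- Spectral function: nonnegative, nondecreasing, right-continuous on `[0,1)`,
integrating to one. -/
def IsSpectral (σ : ℝ → ℝ) : Prop :=
  (∀ t ∈ Ico (0:ℝ) 1, 0 ≤ σ t) ∧ MonotoneOn σ (Ico (0:ℝ) 1) ∧
  (∀ t ∈ Ico (0:ℝ) 1, ContinuousWithinAt σ (Ici t) t) ∧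
  (∫ t in Ioo (0:ℝ) 1, σ t) = 1

/-- An element of `L_q` is (a.e.) spectral if it has a spectral representative. -/
def IsSpectralAE (σ : ℝ → ℝ) : Prop := ∃ σ₀ : ℝ → ℝ, IsSpectral σ₀ ∧ σ =ᵐ[stdP] σ₀

/-- `∫₀¹ AV@R_α(Z) dμ(α)`. -/
def kusuokaIntegral (μ : Measure ℝ) (Z : ℝ → ℝ) : ℝ := ∫ α, avar Z α ∂μ

/-- `∫₀¹ σ(τ) F_Z^{-1}(τ) dτ`. -/
def spectralIntegral (σ Z : ℝ → ℝ) : ℝ := ∫ t in Ioo (0:ℝ) 1, σ t * quant Z t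

/-- Coherent risk measure on `L_p` of the standard space: monotone, convex,
translation equivariant and positively homogeneous. -/
def IsCoherent (p : ℝ≥0∞) (ρ : (ℝ → ℝ) → ℝ) : Prop :=
  (∀ Z Z' : ℝ → ℝ, MemLp Z p stdP → MemLp Z' p stdP →
      (∀ᵐ ω ∂stdP, Z' ω ≤ Z ω) → ρ Z' ≤ ρ Z) ∧
  (∀ Z Z' : ℝ → ℝ, ∀ t : ℝ, MemLp Z p stdP → MemLp Z' p stdP → t ∈ Icc (0:ℝ) 1 →
      ρ (fun ω => t * Z ω + (1 - t) * Z' ω) ≤ t * ρ Z + (1 - t) * ρ Z') ∧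
  (∀ Z : ℝ → ℝ, ∀ a : ℝ, MemLp Z p stdP → ρ (fun ω => Z ω + a) = ρ Z + a) ∧
  (∀ Z : ℝ → ℝ, ∀ t : ℝ, MemLp Z p stdP → 0 ≤ t → ρ (fun ω => t * Z ω) = t * ρ Z)

/-- Law invariance: distributionally equivalent random variables get the same value. -/
def IsLawInvariant (p : ℝ≥0∞) (ρ : (ℝ → ℝ) → ℝ) : Prop :=
  ∀ Z Z' : ℝ → ℝ, MemLp Z p stdP → MemLp Z' p stdP → cdf Z = cdf Z' → ρ Z = ρ Z'

/-- `𝔐 ⊆ 𝔓` is a Kusuoka set for `ρ` : `ρ(Z) = sup_{μ∈𝔐} ∫₀¹ AV@R_α(Z) dμ(α)`. -/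
def IsKusuokaSet (p : ℝ≥0∞) (ρ : (ℝ → ℝ) → ℝ) (M : Set (Measure ℝ)) : Prop :=
  (∀ μ ∈ M, IsP01 μ) ∧
  ∀ Z : ℝ → ℝ, MemLp Z p stdP →
    IsLUB {x : ℝ | ∃ μ ∈ M, x = kusuokaIntegral μ Z} (ρ Z)

/-- `Υ ⊆ 𝔖` is a generating set for `ρ` : `ρ(Z) = sup_{σ∈Υ} ∫₀¹ σ(τ) F_Z^{-1}(τ) dτ`. -/
def IsGeneratingSet (p : ℝ≥0∞) (ρ : (ℝ → ℝ) → ℝ) (Υ : Set (ℝ → ℝ)) : Prop :=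
  (∀ σ ∈ Υ, IsSpectralAE σ) ∧
  ∀ Z : ℝ → ℝ, MemLp Z p stdP →
    IsLUB {x : ℝ | ∃ σ ∈ Υ, x = spectralIntegral σ Z} (ρ Z)

/-- The dual set `𝔄 = {ζ ∈ Z* : ⟨ζ,Z⟩ ≤ ρ(Z) for all Z ∈ Z}`. -/
def dualSet (p q : ℝ≥0∞) (ρ : (ℝ → ℝ) → ℝ) : Set (ℝ → ℝ) :=
  {ζ : ℝ → ℝ | MemLp ζ q stdP ∧ ∀ Z : ℝ → ℝ, MemLp Z p stdP → pairing ζ Z ≤ ρ Z}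

/-- `Z` exposes `A` at `ζbar`: `ζ ↦ ⟨ζ,Z⟩` attains its maximum over `A`
at the unique (up to a.e. equality) point `ζbar`. -/
def Exposes (A : Set (ℝ → ℝ)) (Z ζbar : ℝ → ℝ) : Prop :=
  ζbar ∈ A ∧ (∀ ζ ∈ A, pairing ζ Z ≤ pairing ζbar Z) ∧
  ∀ ζ ∈ A, pairing ζ Z = pairing ζbar Z → ζ =ᵐ[stdP] ζbar

/-- The set `Exp(A)` of weak* exposed points of `A`. -/
def expPoints (p : ℝ≥0∞) (A : Set (ℝ → ℝ)) : Set (ℝ → ℝ) :=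
  {ζ : ℝ → ℝ | ∃ Z : ℝ → ℝ, MemLp Z p stdP ∧ Exposes A Z ζ}

/-- The weak* topology on (densities of) elements of `Z* = L_q`, induced by the
pairings against elements of `Z = L_p`. -/
def wstarTop (p : ℝ≥0∞) : TopologicalSpace (ℝ → ℝ) :=
  TopologicalSpace.induced
    (fun ζ => fun Z : {Z : ℝ → ℝ // MemLp Z p stdP} => pairing ζ Z.1)
    Pi.topologicalSpace

/-- Weak* closure. -/
def wstarClosure (p : ℝ≥0∞) (S : Set (ℝ → ℝ)) : Set (ℝ → ℝ) :=
  @closure _ (wstarTop p) S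

/-- Weak* closedness. -/
def IsWStarClosed (p : ℝ≥0∞) (S : Set (ℝ → ℝ)) : Prop :=
  @IsClosed _ (wstarTop p) S

/-- The weak topology of measures, induced by integration of bounded continuous functions. -/
def weakTopM : TopologicalSpace (Measure ℝ) :=
  TopologicalSpace.induced
    (fun μ => fun f : BoundedContinuousFunction ℝ ℝ => ∫ x, f x ∂μ)
    Pi.topologicalSpace

/-- Closure in the weak topology of measures. -/
def weakClosureM (M : Set (Measure ℝ)) : Set (Measure ℝ) := @closure _ weakTopM M

/-- Closure within `𝔓` (in the weak topology of measures). -/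
def closureP (M : Set (Measure ℝ)) : Set (Measure ℝ) := weakClosureM M ∩ {μ | IsP01 μ}

/-- Closedness within `𝔓`. -/
def IsClosedInP (M : Set (Measure ℝ)) : Prop := closureP M ⊆ M

/-- The minimal Kusuoka set: a closed Kusuoka set contained in every closed Kusuoka set. -/
def IsMinimalKusuoka (p : ℝ≥0∞) (ρ : (ℝ → ℝ) → ℝ) (M : Set (Measure ℝ)) : Prop :=
  IsKusuokaSet p ρ M ∧ IsClosedInP M ∧
  ∀ M' : Set (Measure ℝ), IsKusuokaSet p ρ M' → IsClosedInP M' → M ⊆ M'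

/-- Measure-preserving transformations of `[0,1]`: bijections of `[0,1]` with
`P(T(A)) = P(A)` for all measurable `A`. -/
def IsMPT (T : ℝ → ℝ) : Prop :=
  Measurable T ∧ BijOn T (Icc (0:ℝ) 1) (Icc (0:ℝ) 1) ∧
  ∀ A : Set ℝ, MeasurableSet A → stdP (T '' A) = stdP A

/-!
The quantile function `quant Z` is nondecreasing on `(0,1)` and carries Lebesgue measure there
to the law of `Z`, so it lies in `L_p(0,1)` and, by Hölder, pairs with `σ₁, σ₂ ∈ L_q`.
Majorization says that `δ = σ₂ - σ₁` has `∫_γ^1 δ ≥ 0` for every `γ` and `∫_0^1 δ = 0`; the claim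
is `∫_0^1 δ g ≥ 0` for the nondecreasing `g = quant Z`, an integral form of Abel summation.
Write `g t = ∫ (𝟙[s < g t] - 𝟙[s < 0]) ds` and swap the integrals: for fixed `s` the set
`{t | s < g t}` is a tail `(γ, 1)` up to one point, so the inner integral is
`∫_γ^1 δ - 𝟙[s < 0] ∫_0^1 δ ≥ 0`.
-/

instance isProbabilityMeasure_stdP : IsProbabilityMeasure stdP := ⟨by simp [stdP, Real.volume_Icc]⟩

def quantile (ν : Measure ℝ) (τ : ℝ) : ℝ := sSup {t : ℝ | ProbabilityTheory.cdf ν t ≤ τ}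

section Quantile

variable (ν : Measure ℝ)

lemma nonempty_cdf_le {τ : ℝ} (hτ : 0 < τ) : {t : ℝ | ProbabilityTheory.cdf ν t ≤ τ}.Nonempty :=
  ((ProbabilityTheory.tendsto_cdf_atBot ν).eventually (eventually_le_nhds hτ)).exists

lemma bddAbove_cdf_le {τ : ℝ} (hτ : τ < 1) : BddAbove {t : ℝ | ProbabilityTheory.cdf ν t ≤ τ} := by
  obtain ⟨M, hM⟩ :=
    ((ProbabilityTheory.tendsto_cdf_atTop ν).eventually (eventually_gt_nhds hτ)).exists
  exact ⟨M, fun t ht => le_of_not_gt fun hMt =>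
    (ht.trans_lt hM).not_ge (ProbabilityTheory.monotone_cdf ν hMt.le)⟩

lemma monotoneOn_quantile : MonotoneOn (quantile ν) (Ioo 0 1) := fun _ ha _ hb hab =>
  csSup_le_csSup (bddAbove_cdf_le ν hb.2) (nonempty_cdf_le ν ha.1) fun _ ht => ht.trans hab

lemma quantile_le_of_lt_cdf {τ s : ℝ} (hτ : 0 < τ) (h : τ < ProbabilityTheory.cdf ν s) :
    quantile ν τ ≤ s :=
  csSup_le (nonempty_cdf_le ν hτ) fun _ ht => le_of_not_gt fun hst =>
    (ht.trans_lt h).not_ge (ProbabilityTheory.monotone_cdf ν hst.le)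

lemma le_cdf_of_quantile_le {τ s : ℝ} (hτ : τ < 1) (h : quantile ν τ ≤ s) :
    τ ≤ ProbabilityTheory.cdf ν s := by
  have hgt : ∀ᶠ t in 𝓝[>] s, τ < ProbabilityTheory.cdf ν t :=
    eventually_nhdsWithin_of_forall fun t hst => lt_of_not_ge fun ht =>
      (h.trans_lt hst).not_ge (le_csSup (bddAbove_cdf_le ν hτ) ht)
  exact ge_of_tendsto (((ProbabilityTheory.cdf ν).right_continuous s).mono Ioi_subset_Ici_self)
    (hgt.mono fun _ => le_of_lt)

lemma aemeasurable_quantile : AEMeasurable (quantile ν) (volume.restrict (Ioo (0:ℝ) 1)) :=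
  aemeasurable_restrict_of_monotoneOn measurableSet_Ioo (monotoneOn_quantile ν)

variable [IsProbabilityMeasure ν]

theorem map_quantile : (volume.restrict (Ioo (0:ℝ) 1)).map (quantile ν) = ν := by
  have hmeas := aemeasurable_quantile ν
  have : IsProbabilityMeasure (volume.restrict (Ioo (0:ℝ) 1)) := ⟨by simp⟩
  have := Measure.isProbabilityMeasure_map hmeas
  refine Measure.ext_of_Iic _ _ fun s => ?_
  rw [Measure.map_apply_of_aemeasurable hmeas measurableSet_Iic,
    Measure.restrict_apply' measurableSet_Ioo, ← ProbabilityTheory.ofReal_cdf]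
  have hF := ProbabilityTheory.cdf_le_one ν s
  refine le_antisymm ?_ ?_
  · calc volume (quantile ν ⁻¹' Iic s ∩ Ioo 0 1)
        ≤ volume (Ioc 0 (ProbabilityTheory.cdf ν s)) :=
          measure_mono fun τ ⟨hτs, hτ⟩ => ⟨hτ.1, le_cdf_of_quantile_le ν hτ.2 hτs⟩
      _ = _ := by rw [Real.volume_Ioc, sub_zero]
  · calc ENNReal.ofReal (ProbabilityTheory.cdf ν s)
        = volume (Ioo 0 (ProbabilityTheory.cdf ν s)) := by rw [Real.volume_Ioo, sub_zero]
      _ ≤ volume (quantile ν ⁻¹' Iic s ∩ Ioo 0 1) := measure_mono fun τ hτ =>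
          ⟨quantile_le_of_lt_cdf ν hτ.1 hτ.2, hτ.1, hτ.2.trans_le hF⟩

lemma memLp_quantile {p : ℝ≥0∞} (h : MemLp id p ν) :
    MemLp (quantile ν) p (volume.restrict (Ioo (0:ℝ) 1)) := by
  rw [← map_quantile ν] at h
  exact (memLp_map_measure_iff aestronglyMeasurable_id (aemeasurable_quantile ν)).1 h

end Quantile

lemma quant_eq_quantile {Z : ℝ → ℝ} (hZ : AEMeasurable Z stdP) :
    quant Z = quantile (stdP.map Z) := by
  have := Measure.isProbabilityMeasure_map (μ := stdP) hZ
  ext τ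
  simp only [quant, quantile, cdf, ProbabilityTheory.cdf_eq_real, measureReal_def,
    Measure.map_apply_of_aemeasurable hZ measurableSet_Iic]
  rfl

lemma memLp_quant {p : ℝ≥0∞} {Z : ℝ → ℝ} (hZ : MemLp Z p stdP) :
    MemLp (quant Z) p (volume.restrict (Ioo (0:ℝ) 1)) := by
  have hZm := hZ.aestronglyMeasurable.aemeasurable
  have := Measure.isProbabilityMeasure_map (μ := stdP) hZm
  rw [quant_eq_quantile hZm]
  exact memLp_quantile _ ((memLp_map_measure_iff aestronglyMeasurable_id hZm).2 hZ)

lemma monotoneOn_quant {Z : ℝ → ℝ} (hZ : AEMeasurable Z stdP) :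
    MonotoneOn (quant Z) (Ioo 0 1) := by
  have := Measure.isProbabilityMeasure_map (μ := stdP) hZ
  rw [quant_eq_quantile hZ]
  exact monotoneOn_quantile _

def layer (b : ℝ) : ℝ → ℝ := (Iio b).indicator 1 - (Iio 0).indicator 1

lemma layer_of_nonneg {b : ℝ} (hb : 0 ≤ b) : layer b = (Ico 0 b).indicator 1 := by
  ext s
  simp only [layer, Pi.sub_apply, indicator_apply, mem_Iio, mem_Ico, Pi.one_apply]
  split_ifs <;> grind

lemma layer_of_nonpos {b : ℝ} (hb : b ≤ 0) : layer b = -(Ico b 0).indicator 1 := by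
  ext s
  simp only [layer, Pi.sub_apply, Pi.neg_apply, indicator_apply, mem_Iio, mem_Ico, Pi.one_apply]
  split_ifs <;> grind

lemma integral_layer (b : ℝ) : ∫ s, layer b s = b := by
  rcases le_total 0 b with hb | hb
  · simp [layer_of_nonneg hb, integral_indicator_one measurableSet_Ico, hb]
  · simp [layer_of_nonpos hb, integral_neg, integral_indicator_one measurableSet_Ico, hb]

lemma integral_abs_layer (b : ℝ) : ∫ s, |layer b s| = |b| := by
  rcases le_total 0 b with hb | hb
  · simp [layer_of_nonneg hb, integral_indicator_one measurableSet_Ico, hb, abs_of_nonneg,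
      indicator_nonneg]
  · simp [layer_of_nonpos hb, integral_indicator_one measurableSet_Ico, hb,
      indicator_nonneg, abs_of_nonpos]

lemma integrable_layer (b : ℝ) : Integrable (layer b) := by
  rcases le_total 0 b with hb | hb
  · rw [layer_of_nonneg hb, integrable_indicator_iff measurableSet_Ico]
    exact integrableOn_const measure_Ico_lt_top.ne
  · rw [layer_of_nonpos hb, integrable_neg_iff, integrable_indicator_iff measurableSet_Ico]
    exact integrableOn_const measure_Ico_lt_top.ne

lemma measurable_uncurry_layer : Measurable (Function.uncurry layer) := by
  unfold layer
  simp only [Function.uncurry_def, Pi.sub_apply, indicator_apply, mem_Iio, Pi.one_apply]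
  exact (Measurable.ite (measurableSet_lt measurable_snd measurable_fst) measurable_const
    measurable_const).sub (Measurable.ite (measurableSet_lt measurable_snd measurable_const)
    measurable_const measurable_const)

section Majorization

variable {a b : ℝ} {δ g : ℝ → ℝ}

lemma exists_ae_lt_iff_mem_Ioo (hab : a ≤ b) (hg : MonotoneOn g (Ioo a b)) (s : ℝ) :
    ∃ γ ∈ Icc a b, ∀ᵐ t ∂volume.restrict (Ioo a b), s < g t ↔ t ∈ Ioo γ b := by
  set S := insert b {t | t ∈ Ioo a b ∧ s < g t}
  have haS : ∀ t ∈ S, a ≤ t := forall_mem_insert.2 ⟨hab, fun t ht => ht.1.1.le⟩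
  have hS : BddBelow S := ⟨a, haS⟩
  refine ⟨sInf S, ⟨le_csInf (insert_nonempty _ _) haS, csInf_le hS (mem_insert _ _)⟩, ?_⟩
  filter_upwards [ae_restrict_mem measurableSet_Ioo, ae_restrict_of_ae (volume.ae_ne (sInf S))]
    with t ht htγ
  constructor
  · intro hst
    exact ⟨(csInf_le hS (mem_insert_of_mem _ ⟨ht, hst⟩)).lt_of_ne' htγ, ht.2⟩
  · rintro ⟨hγt, htb⟩
    obtain ⟨u, hu, hut⟩ := exists_lt_of_csInf_lt (insert_nonempty _ _) hγt
    rcases hu with rfl | ⟨hu, hsu⟩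
    · exact absurd hut htb.not_gt
    · exact hsu.trans_le (hg hu ht hut.le)

lemma integral_mul_layer_nonneg (hab : a ≤ b) (hδ : IntegrableOn δ (Ioo a b))
    (hg : MonotoneOn g (Ioo a b)) (htail : ∀ γ ∈ Icc a b, 0 ≤ ∫ t in Ioo γ b, δ t)
    (hzero : ∫ t in Ioo a b, δ t = 0) (s : ℝ) :
    0 ≤ ∫ t in Ioo a b, δ t * layer (g t) s := by
  obtain ⟨γ, hγ, hiff⟩ := exists_ae_lt_iff_mem_Ioo hab hg s
  have hK : (fun t => δ t * layer (g t) s) =ᵐ[volume.restrict (Ioo a b)]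
      fun t => (Ioo γ b).indicator δ t - (Iio 0).indicator 1 s * δ t := by
    filter_upwards [hiff] with t ht
    by_cases hts : t ∈ Ioo γ b <;>
      simp [layer, indicator_apply, ht, hts, mul_sub, mul_comm]
  rw [integral_congr_ae hK, integral_sub (hδ.indicator measurableSet_Ioo) (hδ.const_mul _),
    integral_const_mul, hzero, mul_zero, sub_zero, integral_indicator measurableSet_Ioo,
    Measure.restrict_restrict measurableSet_Ioo, Ioo_inter_Ioo, max_eq_left hγ.1, min_self]
  exact htail γ hγ

lemma integrable_prod_mul_layer {μ : Measure ℝ} [SFinite μ] (hδ : AEStronglyMeasurable δ μ)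
    (hg : AEMeasurable g μ) (hδg : Integrable (fun t => δ t * g t) μ) :
    Integrable (Function.uncurry fun t s => δ t * layer (g t) s) (μ.prod volume) := by
  have hmeas : AEStronglyMeasurable (Function.uncurry fun t s => δ t * layer (g t) s)
      (μ.prod volume) :=
    hδ.comp_fst.mul (measurable_uncurry_layer.comp_aemeasurable
      (hg.comp_fst.prodMk measurable_snd.aemeasurable)).aestronglyMeasurable
  refine (integrable_prod_iff hmeas).2 ⟨Eventually.of_forall fun t => ?_, ?_⟩
  · exact (integrable_layer (g t)).const_mul (δ t)
  · refine hδg.norm.congr (Eventually.of_forall fun t => ?_)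
    simp only [Function.uncurry_apply_pair, Real.norm_eq_abs, abs_mul, integral_const_mul,
      integral_abs_layer]

theorem integral_mul_nonneg_of_tail_nonneg (hab : a ≤ b) (hδ : IntegrableOn δ (Ioo a b))
    (hδg : IntegrableOn (fun t => δ t * g t) (Ioo a b)) (hg : MonotoneOn g (Ioo a b))
    (htail : ∀ γ ∈ Icc a b, 0 ≤ ∫ t in Ioo γ b, δ t) (hzero : ∫ t in Ioo a b, δ t = 0) :
    0 ≤ ∫ t in Ioo a b, δ t * g t := calc
  0 ≤ ∫ s, ∫ t in Ioo a b, δ t * layer (g t) s :=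
    integral_nonneg fun s => integral_mul_layer_nonneg hab hδ hg htail hzero s
  _ = ∫ t in Ioo a b, ∫ s, δ t * layer (g t) s :=
    (integral_integral_swap (integrable_prod_mul_layer hδ.1
      (aemeasurable_restrict_of_monotoneOn measurableSet_Ioo hg) hδg)).symm
  _ = ∫ t in Ioo a b, δ t * g t := by simp only [integral_const_mul, integral_layer]

end Majorization

theorem majorization_implies_spectral_le_general
    (p q : ℝ≥0∞) (hpq : 1 / p + 1 / q = 1)
    (σ1 σ2 : ℝ → ℝ)
    (hq1 : MemLp σ1 q stdP) (hq2 : MemLp σ2 q stdP)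
    (hmaj1 : ∀ γ ∈ Icc (0:ℝ) 1, (∫ t in Ioo γ 1, σ1 t) ≤ ∫ t in Ioo γ 1, σ2 t)
    (hmaj2 : (∫ t in Ioo (0:ℝ) 1, σ1 t) = ∫ t in Ioo (0:ℝ) 1, σ2 t)
    (Z : ℝ → ℝ) (hZ : MemLp Z p stdP) :
    spectralIntegral σ1 Z ≤ spectralIntegral σ2 Z := by
  have : q.HolderConjugate p := ENNReal.holderConjugate_iff.2 (by simpa [add_comm] using hpq)
  have hrestrict : volume.restrict (Ioo (0:ℝ) 1) ≤ stdP :=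
    Measure.restrict_mono Ioo_subset_Icc_self le_rfl
  have hσ1 := hq1.mono_measure hrestrict
  have hσ2 := hq2.mono_measure hrestrict
  have hi1 : IntegrableOn σ1 (Ioo 0 1) := hσ1.integrable (ENNReal.HolderConjugate.one_le q p)
  have hi2 : IntegrableOn σ2 (Ioo 0 1) := hσ2.integrable (ENNReal.HolderConjugate.one_le q p)
  have hg := memLp_quant hZ
  have hm1 : IntegrableOn (fun t => σ1 t * quant Z t) (Ioo 0 1) := hσ1.integrable_mul hg
  have hm2 : IntegrableOn (fun t => σ2 t * quant Z t) (Ioo 0 1) := hσ2.integrable_mul hg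
  have key : 0 ≤ ∫ t in Ioo 0 1, (σ2 t - σ1 t) * quant Z t := by
    refine integral_mul_nonneg_of_tail_nonneg zero_le_one (hi2.sub hi1)
      ((hσ2.sub hσ1).integrable_mul hg) (monotoneOn_quant hZ.aestronglyMeasurable.aemeasurable)
      (fun γ hγ => ?_) (by rw [integral_sub hi2 hi1, hmaj2, sub_self])
    have hsub : Ioo γ 1 ⊆ Ioo 0 1 := Ioo_subset_Ioo_left hγ.1
    rw [integral_sub (hi2.mono_set hsub) (hi1.mono_set hsub), sub_nonneg]
    exact hmaj1 γ hγ
  rw [← sub_nonneg, spectralIntegral, spectralIntegral, ← integral_sub hm2 hm1]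
  simpa only [sub_mul] using key

/-- If the spectral function `σ₁ ∈ L_q` is majorized by the spectral
function `σ₂ ∈ L_q`, then `∫₀¹ σ₁ F_Z^{-1} ≤ ∫₀¹ σ₂ F_Z^{-1}` for every `Z ∈ L_p`. -/
theorem majorization_implies_spectral_le
    (p q : ℝ≥0∞) (hp : 1 ≤ p) (hp' : p ≠ ∞) (hpq : 1 / p + 1 / q = 1)
    (σ1 σ2 : ℝ → ℝ) (hs1 : IsSpectral σ1) (hs2 : IsSpectral σ2)
    (hq1 : MemLp σ1 q stdP) (hq2 : MemLp σ2 q stdP)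
    (hmaj1 : ∀ γ ∈ Icc (0:ℝ) 1, (∫ t in Ioo γ 1, σ1 t) ≤ ∫ t in Ioo γ 1, σ2 t)
    (hmaj2 : (∫ t in Ioo (0:ℝ) 1, σ1 t) = ∫ t in Ioo (0:ℝ) 1, σ2 t)
    (Z : ℝ → ℝ) (hZ : MemLp Z p stdP) :
    spectralIntegral σ1 Z ≤ spectralIntegral σ2 Z :=
  majorization_implies_spectral_le_general p q hpq σ1 σ2 hq1 hq2 hmaj1 hmaj2 Z hZ

end
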